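/- arXiv:1403.6444 — 3 statements merged into one kernel-verified Lean document; each statement's English description precedes it below -/
import Mathlib

section
/- Let A be a commutative ℂ-algebra and let X and Y be ℂ-linear derivations of A satisfying Y ∘ X − X ∘ Y = Y. Then the bracket {f, g} := X(f)·Y(g) − Y(f)·X(g) is antisymmetric, is a derivation in each argument ({f, gh} = {f, g}·h + g·{f, h}), and satisfies the Jacobi identity {f, {g, h}} + {g, {h, f}} + {h, {f, g}} = 0 for all f, g, h ∈ A. -/
namespace Derivation

variable {R A : Type*} [CommSemiring R] [CommRing A] [Algebra R A]

def wedgeBracket (X Y : Derivation R A A) (f g : A) : A :=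
  X f * Y g - Y f * X g

variable (X Y : Derivation R A A)

theorem wedgeBracket_antisymm (f g : A) : wedgeBracket X Y f g = -wedgeBracket X Y g f := by
  unfold wedgeBracket; ring

theorem wedgeBracket_mul_right (f g h : A) :
    wedgeBracket X Y f (g * h) = wedgeBracket X Y f g * h + g * wedgeBracket X Y f h := by
  simp only [wedgeBracket, leibniz, smul_eq_mul]; ring

/-- The Schouten bracket of `X ∧ Y` with itself is `2 ⁅X, Y⁆ ∧ X ∧ Y`, which vanishes as soon as
`⁅X, Y⁆` lies in the `A`-span of `X` and `Y`. -/
theorem wedgeBracket_jacobi {a b : A} (hXY : ∀ t, Y (X t) - X (Y t) = a * X t + b * Y t)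
    (f g h : A) :
    wedgeBracket X Y f (wedgeBracket X Y g h) + wedgeBracket X Y g (wedgeBracket X Y h f) +
      wedgeBracket X Y h (wedgeBracket X Y f g) = 0 := by
  have hYX : ∀ t, Y (X t) = X (Y t) + a * X t + b * Y t := fun t => by
    linear_combination hXY t
  simp only [wedgeBracket, map_sub, leibniz, smul_eq_mul, hYX]
  ring

end Derivation

open Derivation in
/-- If `X, Y` are derivations of a commutative `ℂ`-algebra `A` with `Y ∘ X - X ∘ Y = Y`,
then `{f, g} = X(f)·Y(g) - Y(f)·X(g)` is antisymmetric, a derivation in each argument,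
and satisfies the Jacobi identity. -/
theorem stmt_5 (A : Type*) [CommRing A] [Algebra ℂ A]
    (X Y : Derivation ℂ A A)
    (hcomm : Y.toLinearMap ∘ₗ X.toLinearMap - X.toLinearMap ∘ₗ Y.toLinearMap = Y.toLinearMap)
    (br : A → A → A)
    (hbr : ∀ f g : A, br f g = X f * Y g - Y f * X g) :
    (∀ f g : A, br f g = - br g f) ∧
    (∀ f g h : A, br f (g * h) = br f g * h + g * br f h) ∧
    (∀ f g h : A, br f (br g h) + br g (br h f) + br h (br f g) = 0) := by
  obtain rfl : br = wedgeBracket X Y := funext₂ hbr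
  have hXY : ∀ t, Y (X t) - X (Y t) = 0 * X t + 1 * Y t := fun t => by
    simpa using LinearMap.congr_fun hcomm t
  exact ⟨wedgeBracket_antisymm X Y, wedgeBracket_mul_right X Y, wedgeBracket_jacobi X Y hXY⟩
end

section
/- Work in R = ℂ[x₀, x₁, x₂, x₃]. Define the antisymmetric matrix π with π₀₁ = 5x₀², π₀₂ = 5x₀x₁, π₀₃ = 5x₀x₂, π₁₂ = x₁² + 3x₀x₂, π₁₃ = x₁x₂ + 7x₀x₃, π₂₃ = 7x₁x₃ − 3x₂² (and π j i = −π i j, π i i = 0). Let X(f) = −(5/4)x₀∂₀f − (1/4)x₁∂₁f + (3/4)x₂∂₂f + (7/4)x₃∂₃f and Y(f) = 4x₀∂₁f + 4x₁∂₂f + 4x₂∂₃f. Then (a) π i j = Y(xᵢ)·X(xⱼ) − X(xᵢ)·Y(xⱼ) for all i, j; (b) the bracket {f, g} = Σ_{i,j} π i j · ∂ᵢf · ∂ⱼg satisfies the Jacobi identity {f,{g,h}} + {g,{h,f}} + {h,{f,g}} = 0 for all f, g, h ∈ R; and (c) π is unimodular: Σ_j ∂ⱼ(π i j) = 0 for every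 i. -/
/-!
Every derivation of `ℂ[x₀, …, x₃]` is `Σ D(xᵢ) ∂ᵢ`, so the entrywise identity
`π i j = Y(xᵢ) X(xⱼ) - X(xᵢ) Y(xⱼ)` says that the bracket of `π` is the wedge
`{f, g} = Y f · X g - X f · Y g`. The Jacobiator of a wedge `D₁ ∧ D₂` is a multiple of
`⁅D₁, D₂⁆ ∧ D₁ ∧ D₂`, which vanishes here because `⁅Y, X⁆ = Y`. Unimodularity is the
divergence formula `Σⱼ ∂ⱼ (D₁ ∧ D₂)ᵢⱼ = ⁅D₂, D₁⁆ xᵢ + D₁ xᵢ · div D₂ - D₂ xᵢ · div D₁`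
together with `div X = 1` and `div Y = 0`.
-/

open MvPolynomial

noncomputable section

/-- The bracket `{f,g} = Σ_{i,j} π i j · ∂ᵢf · ∂ⱼg` determined by a matrix of polynomials. -/
def brkt (π : Fin 4 → Fin 4 → MvPolynomial (Fin 4) ℂ)
    (f g : MvPolynomial (Fin 4) ℂ) : MvPolynomial (Fin 4) ℂ :=
  ∑ i : Fin 4, ∑ j : Fin 4, π i j * pderiv i f * pderiv j g

/-- `X = -(5/4)x₀∂₀ - (1/4)x₁∂₁ + (3/4)x₂∂₂ + (7/4)x₃∂₃`. -/
def XE3 (f : MvPolynomial (Fin 4) ℂ) : MvPolynomial (Fin 4) ℂ :=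
  -(5/4 : ℂ) • (X 0 * pderiv 0 f) - (1/4 : ℂ) • (X 1 * pderiv 1 f)
    + (3/4 : ℂ) • (X 2 * pderiv 2 f) + (7/4 : ℂ) • (X 3 * pderiv 3 f)

/-- `Y = 4x₀∂₁ + 4x₁∂₂ + 4x₂∂₃`. -/
def YE3 (f : MvPolynomial (Fin 4) ℂ) : MvPolynomial (Fin 4) ℂ :=
  (4 : ℂ) • (X 0 * pderiv 1 f) + (4 : ℂ) • (X 1 * pderiv 2 f) + (4 : ℂ) • (X 2 * pderiv 3 f)

section Wedge

variable {R A : Type*} [CommRing R] [CommRing A] [Algebra R A]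

def Derivation.wedge (D₁ D₂ : Derivation R A A) (f g : A) : A :=
  D₁ f * D₂ g - D₂ f * D₁ g

theorem Derivation.wedge_jacobi {D₁ D₂ : Derivation R A A} {a b : A}
    (h : ⁅D₁, D₂⁆ = a • D₁ + b • D₂) (f g k : A) :
    D₁.wedge D₂ f (D₁.wedge D₂ g k) + D₁.wedge D₂ g (D₁.wedge D₂ k f)
      + D₁.wedge D₂ k (D₁.wedge D₂ f g) = 0 := by
  have hcomm (u : A) : D₁ (D₂ u) = D₂ (D₁ u) + a * D₁ u + b * D₂ u := by
    have hu := DFunLike.congr_fun h u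
    simp only [Derivation.commutator_apply, Derivation.add_apply, Derivation.smul_apply,
      smul_eq_mul] at hu
    linear_combination hu
  simp only [Derivation.wedge, map_sub, Derivation.leibniz, smul_eq_mul, hcomm]
  ring

end Wedge

section Coordinates

variable {R σ : Type*} [CommRing R] [Fintype σ]

theorem MvPolynomial.derivation_apply_eq_sum_pderiv
    (D : Derivation R (MvPolynomial σ R) (MvPolynomial σ R)) (f : MvPolynomial σ R) :
    D f = ∑ i, D (X i) * pderiv i f := by
  classical
  have hsum (g : MvPolynomial σ R) : (∑ i, D (X i) • pderiv i) g = ∑ i, D (X i) * pderiv i g := by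
    rw [← Derivation.coeFnAddMonoidHom_apply, map_sum, Finset.sum_apply]; rfl
  have hD : D = ∑ i, D (X i) • pderiv i :=
    derivation_ext fun k => by simp [hsum, pderiv_X, Pi.single_apply]
  rw [← hsum, ← hD]

theorem MvPolynomial.sum_wedge_X_mul_pderiv
    (D₁ D₂ : Derivation R (MvPolynomial σ R) (MvPolynomial σ R)) (f g : MvPolynomial σ R) :
    ∑ i, ∑ j, D₁.wedge D₂ (X i) (X j) * pderiv i f * pderiv j g = D₁.wedge D₂ f g := by
  rw [Derivation.wedge, derivation_apply_eq_sum_pderiv D₁ f, derivation_apply_eq_sum_pderiv D₂ f,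
    derivation_apply_eq_sum_pderiv D₁ g, derivation_apply_eq_sum_pderiv D₂ g]
  simp only [Derivation.wedge, Finset.sum_mul_sum, ← Finset.sum_sub_distrib]
  refine Finset.sum_congr rfl fun i _ => Finset.sum_congr rfl fun j _ => ?_
  ring

def MvPolynomial.divergence (D : Derivation R (MvPolynomial σ R) (MvPolynomial σ R)) :
    MvPolynomial σ R :=
  ∑ j, pderiv j (D (X j))

theorem MvPolynomial.sum_pderiv_wedge_X
    (D₁ D₂ : Derivation R (MvPolynomial σ R) (MvPolynomial σ R)) (i : σ) :
    ∑ j, pderiv j (D₁.wedge D₂ (X i) (X j)) =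
      ⁅D₂, D₁⁆ (X i) + D₁ (X i) * divergence D₂ - D₂ (X i) * divergence D₁ := by
  simp only [Derivation.wedge, divergence, map_sub, Derivation.leibniz, smul_eq_mul,
    Finset.sum_sub_distrib, Finset.sum_add_distrib, Finset.mul_sum, Derivation.commutator_apply,
    derivation_apply_eq_sum_pderiv D₂ (D₁ (X i)), derivation_apply_eq_sum_pderiv D₁ (D₂ (X i))]
  ring

end Coordinates

def derivXE3 : Derivation ℂ (MvPolynomial (Fin 4) ℂ) (MvPolynomial (Fin 4) ℂ) :=
  -(5/4 : ℂ) • (X 0 : MvPolynomial (Fin 4) ℂ) • pderiv 0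
    - (1/4 : ℂ) • (X 1 : MvPolynomial (Fin 4) ℂ) • pderiv 1
    + (3/4 : ℂ) • (X 2 : MvPolynomial (Fin 4) ℂ) • pderiv 2
    + (7/4 : ℂ) • (X 3 : MvPolynomial (Fin 4) ℂ) • pderiv 3

def derivYE3 : Derivation ℂ (MvPolynomial (Fin 4) ℂ) (MvPolynomial (Fin 4) ℂ) :=
  (4 : ℂ) • (X 0 : MvPolynomial (Fin 4) ℂ) • pderiv 1
    + (4 : ℂ) • (X 1 : MvPolynomial (Fin 4) ℂ) • pderiv 2
    + (4 : ℂ) • (X 2 : MvPolynomial (Fin 4) ℂ) • pderiv 3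

theorem derivXE3_apply (f : MvPolynomial (Fin 4) ℂ) : derivXE3 f = XE3 f := by
  simp [derivXE3, XE3]

theorem derivYE3_apply (f : MvPolynomial (Fin 4) ℂ) : derivYE3 f = YE3 f := by
  simp [derivYE3, YE3]

theorem lie_derivYE3_derivXE3 : ⁅derivYE3, derivXE3⁆ = derivYE3 := by
  refine derivation_ext fun i => ?_
  fin_cases i <;> simp [Derivation.commutator_apply, derivXE3, derivYE3, pderiv_X] <;> module

theorem divergence_derivXE3 : divergence derivXE3 = 1 := by
  simp [divergence, derivXE3, Fin.sum_univ_four]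
  module

theorem divergence_derivYE3 : divergence derivYE3 = 0 := by
  simp [divergence, derivYE3, Fin.sum_univ_four]

/-- Properties of the normal form of the `E(3)` Poisson structure:
(a) `π i j = Y(xᵢ)X(xⱼ) - X(xᵢ)Y(xⱼ)`; (b) the bracket satisfies the Jacobi identity;
(c) `π` is unimodular. -/
theorem stmt_8 (π : Fin 4 → Fin 4 → MvPolynomial (Fin 4) ℂ)
    (hskew : ∀ i j, π j i = - π i j)
    (h01 : π 0 1 = 5 * X 0 ^ 2)
    (h02 : π 0 2 = 5 * X 0 * X 1)
    (h03 : π 0 3 = 5 * X 0 * X 2)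
    (h12 : π 1 2 = X 1 ^ 2 + 3 * X 0 * X 2)
    (h13 : π 1 3 = X 1 * X 2 + 7 * X 0 * X 3)
    (h23 : π 2 3 = 7 * X 1 * X 3 - 3 * X 2 ^ 2) :
    (∀ i j, π i j = YE3 (X i) * XE3 (X j) - XE3 (X i) * YE3 (X j)) ∧
    (∀ f g h : MvPolynomial (Fin 4) ℂ,
      brkt π f (brkt π g h) + brkt π g (brkt π h f) + brkt π h (brkt π f g) = 0) ∧
    (∀ i : Fin 4, ∑ j : Fin 4, pderiv j (π i j) = 0) := by
  have hdiag (i : Fin 4) : π i i = 0 := CharZero.eq_neg_self_iff.mp (hskew i i)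
  have hπ (i j : Fin 4) : π i j = derivYE3.wedge derivXE3 (X i) (X j) := by
    fin_cases i <;> fin_cases j <;>
      simp [Derivation.wedge, derivXE3, derivYE3, pderiv_X, hdiag, hskew 0 1, hskew 0 2,
        hskew 0 3, hskew 1 2, hskew 1 3, hskew 2 3, h01, h02, h03, h12, h13, h23] <;> algebra
  have hbrkt : brkt π = derivYE3.wedge derivXE3 := by
    funext f g
    simp only [brkt, hπ, sum_wedge_X_mul_pderiv]
  refine ⟨fun i j => ?_, fun f g h => ?_, fun i => ?_⟩
  · rw [hπ, Derivation.wedge, derivXE3_apply, derivXE3_apply, derivYE3_apply, derivYE3_apply]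
  · rw [hbrkt]
    refine Derivation.wedge_jacobi (a := 1) (b := 0) ?_ f g h
    rw [lie_derivYE3_derivXE3, one_smul, zero_smul, add_zero]
  · simp only [hπ, sum_pderiv_wedge_X, divergence_derivXE3, divergence_derivYE3, mul_one, mul_zero,
      sub_zero]
    rw [← lie_skew, lie_derivYE3_derivXE3, Derivation.neg_apply, neg_add_cancel]

end
end

section
/- Work in R = ℂ[x₀, x₁, x₂, x₃] and let a₁, a₂, a₃ ∈ ℂ satisfy a₁ + a₂ + a₃ = 0. Define the antisymmetric matrix π with π₀₁ = (a₃ − a₂)x₂x₃, π₀₂ = (a₁ − a₃)x₃x₁, π₀₃ = (a₂ − a₁)x₁x₂, π₁₂ = −x₀x₃, π₁₃ = x₀x₂, π₂₃ = −x₀x₁ (and π j i = −π i j). Then the bracket {f, g} = Σ_{i,j} π i j · ∂ᵢf · ∂ⱼg satisfies the Jacobi identity, and π is unimodular: Σ_j ∂ⱼ(π i j) = 0 for every i. -/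
/-!
For a bracket given by an antisymmetric matrix `π`, the terms of the Jacobiator involving second
derivatives cancel in pairs (antisymmetry of `π` against symmetry of mixed partials), so the
Jacobiator is `Σ J(xₐ, x_b, x_c) ∂ₐf ∂_b g ∂_c h`. The Jacobi identity therefore only has to be
checked on coordinate functions, where for the Sklyanin matrix it is a finite polynomial identity,
as is unimodularity.
-/

open MvPolynomial

noncomputable section

open Finset

theorem Finset.sum_sum_sum_rotate {ι M : Type*} [Fintype ι] [AddCommMonoid M]
    (F : ι → ι → ι → M) : ∑ a, ∑ b, ∑ c, F a b c = ∑ a, ∑ b, ∑ c, F b c a :=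
  calc _ = ∑ a, ∑ c, ∑ b, F a b c := sum_congr rfl fun _ _ => sum_comm
    _ = _ := sum_comm

namespace MvPolynomial

variable {σ R : Type*} [CommRing R]

theorem pderiv_pderiv_comm (i j : σ) (p : MvPolynomial σ R) :
    pderiv i (pderiv j p) = pderiv j (pderiv i p) := by
  classical
  have hzero : ⁅pderiv i, pderiv j⁆ = (0 : Derivation R (MvPolynomial σ R) (MvPolynomial σ R)) :=
    derivation_ext fun k => by
      rw [Derivation.commutator_apply]
      simp [Pi.single_apply, apply_ite]
  rw [← sub_eq_zero, ← Derivation.commutator_apply, hzero, Derivation.zero_apply]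

variable [Fintype σ] (π : σ → σ → MvPolynomial σ R)

def bracket (f g : MvPolynomial σ R) : MvPolynomial σ R :=
  ∑ i, ∑ j, π i j * pderiv i f * pderiv j g

def jacobiator (f g h : MvPolynomial σ R) : MvPolynomial σ R :=
  bracket π f (bracket π g h) + bracket π g (bracket π h f) + bracket π h (bracket π f g)

theorem pderiv_bracket (l : σ) (f g : MvPolynomial σ R) :
    pderiv l (bracket π f g) = bracket (fun i j => pderiv l (π i j)) f g +
      bracket π (pderiv l f) g + bracket π f (pderiv l g) := by
  simp only [bracket, map_sum, pderiv_mul, ← sum_add_distrib, pderiv_pderiv_comm l]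
  refine sum_congr rfl fun i _ => sum_congr rfl fun j _ => by ring

theorem bracket_X_left (a : σ) (g : MvPolynomial σ R) :
    bracket π (X a) g = ∑ l, π a l * pderiv l g := by
  classical simp [bracket, Pi.single_apply]

theorem bracket_X_X (a b : σ) : bracket π (X a) (X b) = π a b := by
  classical simp [bracket, Pi.single_apply]

/-- The terms of `{f, {g, h}}` containing second derivatives of `g`. -/
def hessianTerm (f g h : MvPolynomial σ R) : MvPolynomial σ R :=
  ∑ i, ∑ l, π i l * pderiv i f * bracket π (pderiv l g) h

variable {π}

theorem sum_mul_bracket_pderiv_right (hπ : ∀ i j, π j i = -π i j) (f g h : MvPolynomial σ R) :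
    ∑ i, ∑ l, π i l * pderiv i f * bracket π g (pderiv l h) = -hessianTerm π g h f := by
  simp only [hessianTerm, bracket, mul_sum, ← sum_neg_distrib, ← Fintype.sum_prod_type']
  let e : σ × σ × σ × σ ≃ σ × σ × σ × σ :=
    { toFun x := (x.2.2.1, x.2.2.2, x.2.1, x.1)
      invFun y := (y.2.2.2, y.2.2.1, y.1, y.2.1)
      left_inv _ := rfl
      right_inv _ := rfl }
  refine Fintype.sum_equiv e _ _ fun x => ?_
  simp only [e, Equiv.coe_fn_mk, hπ x.2.1 x.1, pderiv_pderiv_comm x.2.1]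
  ring

theorem bracket_bracket (hπ : ∀ i j, π j i = -π i j) (f g h : MvPolynomial σ R) :
    bracket π f (bracket π g h) =
      ∑ a, ∑ b, ∑ c, (∑ l, π a l * pderiv l (π b c)) * pderiv a f * pderiv b g * pderiv c h +
        hessianTerm π f g h - hessianTerm π g h f := by
  rw [sub_eq_add_neg, ← sum_mul_bracket_pderiv_right hπ, hessianTerm, bracket]
  simp only [pderiv_bracket, mul_add, sum_add_distrib]
  congr 2
  simp only [bracket, mul_sum, sum_mul]
  refine sum_congr rfl fun a _ => ?_
  rw [sum_comm]
  refine sum_congr rfl fun b _ => ?_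
  rw [sum_comm]
  exact sum_congr rfl fun c _ => sum_congr rfl fun l _ => by ring

theorem jacobiator_X_X_X (a b c : σ) :
    jacobiator π (X a) (X b) (X c) =
      ∑ l, (π a l * pderiv l (π b c) + π b l * pderiv l (π c a) + π c l * pderiv l (π a b)) := by
  rw [jacobiator, bracket_X_X, bracket_X_X, bracket_X_X]
  simp only [bracket_X_left, sum_add_distrib]

theorem jacobiator_eq_sum (hπ : ∀ i j, π j i = -π i j) (f g h : MvPolynomial σ R) :
    jacobiator π f g h = ∑ a, ∑ b, ∑ c,
      jacobiator π (X a) (X b) (X c) * pderiv a f * pderiv b g * pderiv c h := by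
  set F : σ → σ → σ → MvPolynomial σ R := fun a b c => ∑ l, π a l * pderiv l (π b c)
  have hrot (u v w : MvPolynomial σ R) :
      ∑ a, ∑ b, ∑ c, F a b c * pderiv a u * pderiv b v * pderiv c w =
        ∑ a, ∑ b, ∑ c, F b c a * pderiv b u * pderiv c v * pderiv a w :=
    sum_sum_sum_rotate _
  have hrot₂ : ∑ a, ∑ b, ∑ c, F a b c * pderiv a h * pderiv b f * pderiv c g =
      ∑ a, ∑ b, ∑ c, F c a b * pderiv c h * pderiv a f * pderiv b g :=
    (sum_sum_sum_rotate _).symm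
  calc jacobiator π f g h
      = ∑ a, ∑ b, ∑ c, F a b c * pderiv a f * pderiv b g * pderiv c h +
          ∑ a, ∑ b, ∑ c, F a b c * pderiv a g * pderiv b h * pderiv c f +
          ∑ a, ∑ b, ∑ c, F a b c * pderiv a h * pderiv b f * pderiv c g := by
        rw [jacobiator, bracket_bracket hπ, bracket_bracket hπ, bracket_bracket hπ]
        ring
    _ = _ := by
        rw [hrot g, hrot₂]
        simp only [← sum_add_distrib, jacobiator_X_X_X]
        refine sum_congr rfl fun a _ => sum_congr rfl fun b _ => sum_congr rfl fun c _ => ?_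
        simp only [F, sum_add_distrib]
        ring

theorem jacobiator_eq_zero_of_X_X_X (hπ : ∀ i j, π j i = -π i j)
    (hX : ∀ a b c, jacobiator π (X a) (X b) (X c) = 0) (f g h : MvPolynomial σ R) :
    jacobiator π f g h = 0 := by
  rw [jacobiator_eq_sum hπ]
  simp [hX]

end MvPolynomial

section Sklyanin

variable {R : Type*} [CommRing R] (a₁ a₂ a₃ : R)

def sklyanin : Fin 4 → Fin 4 → MvPolynomial (Fin 4) R :=
  ![![0, C (a₃ - a₂) * (X 2 * X 3), C (a₁ - a₃) * (X 3 * X 1), C (a₂ - a₁) * (X 1 * X 2)],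
    ![-(C (a₃ - a₂) * (X 2 * X 3)), 0, -(X 0 * X 3), X 0 * X 2],
    ![-(C (a₁ - a₃) * (X 3 * X 1)), X 0 * X 3, 0, -(X 0 * X 1)],
    ![-(C (a₂ - a₁) * (X 1 * X 2)), -(X 0 * X 2), X 0 * X 1, 0]]

theorem sklyanin_antisymm (i j : Fin 4) : sklyanin a₁ a₂ a₃ j i = -sklyanin a₁ a₂ a₃ i j := by
  fin_cases i <;> fin_cases j <;> simp [sklyanin]

theorem jacobiator_sklyanin_X_X_X (a b c : Fin 4) :
    jacobiator (sklyanin a₁ a₂ a₃) (X a) (X b) (X c) = 0 := by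
  rw [jacobiator_X_X_X]
  fin_cases a <;> fin_cases b <;> fin_cases c <;>
    simp [Fin.sum_univ_four, sklyanin, Pi.single_apply] <;> ring

theorem sum_pderiv_sklyanin (i : Fin 4) : ∑ j, pderiv j (sklyanin a₁ a₂ a₃ i j) = 0 := by
  fin_cases i <;> simp [Fin.sum_univ_four, sklyanin]

theorem jacobiator_sklyanin (f g h : MvPolynomial (Fin 4) R) :
    jacobiator (sklyanin a₁ a₂ a₃) f g h = 0 :=
  jacobiator_eq_zero_of_X_X_X (sklyanin_antisymm a₁ a₂ a₃)
    (jacobiator_sklyanin_X_X_X a₁ a₂ a₃) f g h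

end Sklyanin

theorem stmt_9_general (a₁ a₂ a₃ : ℂ)
    (π : Fin 4 → Fin 4 → MvPolynomial (Fin 4) ℂ)
    (hskew : ∀ i j, π j i = - π i j)
    (h01 : π 0 1 = C (a₃ - a₂) * (X 2 * X 3))
    (h02 : π 0 2 = C (a₁ - a₃) * (X 3 * X 1))
    (h03 : π 0 3 = C (a₂ - a₁) * (X 1 * X 2))
    (h12 : π 1 2 = - (X 0 * X 3))
    (h13 : π 1 3 = X 0 * X 2)
    (h23 : π 2 3 = - (X 0 * X 1)) :
    (∀ f g h : MvPolynomial (Fin 4) ℂ,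
      brkt π f (brkt π g h) + brkt π g (brkt π h f) + brkt π h (brkt π f g) = 0) ∧
    (∀ i : Fin 4, ∑ j : Fin 4, pderiv j (π i j) = 0) := by
  have hdiag (i : Fin 4) : π i i = 0 := self_eq_neg.mp (hskew i i)
  obtain rfl : π = sklyanin a₁ a₂ a₃ := by
    funext i j
    fin_cases i <;> fin_cases j <;>
      simp [sklyanin, hdiag, hskew 0 1, hskew 0 2, hskew 0 3, hskew 1 2, hskew 1 3, hskew 2 3,
        h01, h02, h03, h12, h13, h23]
  exact ⟨jacobiator_sklyanin a₁ a₂ a₃, sum_pderiv_sklyanin a₁ a₂ a₃⟩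

/-- The Sklyanin Poisson structure (normal form for the component `R(2,2)`) satisfies the
Jacobi identity and is unimodular. -/
theorem stmt_9 (a₁ a₂ a₃ : ℂ) (ha : a₁ + a₂ + a₃ = 0)
    (π : Fin 4 → Fin 4 → MvPolynomial (Fin 4) ℂ)
    (hskew : ∀ i j, π j i = - π i j)
    (h01 : π 0 1 = C (a₃ - a₂) * (X 2 * X 3))
    (h02 : π 0 2 = C (a₁ - a₃) * (X 3 * X 1))
    (h03 : π 0 3 = C (a₂ - a₁) * (X 1 * X 2))
    (h12 : π 1 2 = - (X 0 * X 3))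
    (h13 : π 1 3 = X 0 * X 2)
    (h23 : π 2 3 = - (X 0 * X 1)) :
    (∀ f g h : MvPolynomial (Fin 4) ℂ,
      brkt π f (brkt π g h) + brkt π g (brkt π h f) + brkt π h (brkt π f g) = 0) ∧
    (∀ i : Fin 4, ∑ j : Fin 4, pderiv j (π i j) = 0) :=
  stmt_9_general a₁ a₂ a₃ π hskew h01 h02 h03 h12 h13 h23
end
end
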